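/- arXiv:1008.4167 — 4 statements merged into one kernel-verified Lean document; each statement's English description precedes it below -/
import Mathlib

section
/- For every n ≥ 2, every permutation π of {1,…,n}, and every real β > 1: π ∈ Al(Σ_β) if and only if β > B(π). In particular, if B(π) > 1 then π is not an allowed pattern of Σ_{B(π)}, so the infimum defining B(π) is never attained and B(π) is the maximum β such that π is a forbidden pattern of Σ_β. -/
/-- The shift map iterated `k` times: `(shift k w) i = w (i + k)`,
so `shift k w = w_k w_{k+1} w_{k+2} …`. -/
def shift (k : ℕ) (w : ℕ → ℕ) : ℕ → ℕ := fun i => w (i + k)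

/-- Strict lexicographic order on infinite words: `v < w` iff there is an index `i`
with `v j = w j` for all `j < i` and `v i < w i`. -/
def LexLt (v w : ℕ → ℕ) : Prop := ∃ i, (∀ j < i, v j = w j) ∧ v i < w i

/-- Weak lexicographic order: `v ≤ w` iff `v < w` or `v = w`. -/
def LexLe (v w : ℕ → ℕ) : Prop := LexLt v w ∨ v = w

/-- A word is a bounded sequence of natural numbers. -/
def IsWord (w : ℕ → ℕ) : Prop := ∃ M, ∀ i, w i ≤ M

/-- `fword w β = ∑_{i ≥ 0} w_i β^{-(i+1)} = w_0/β + w_1/β² + …`. -/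
noncomputable def fword (w : ℕ → ℕ) (β : ℝ) : ℝ := ∑' i : ℕ, (w i : ℝ) / β ^ (i + 1)

open Classical in
/-- `B̂(w)`: zero for the zero word, and otherwise `inf {β > 1 : f_w(β) ≤ 1}`. -/
noncomputable def Bhat (w : ℕ → ℕ) : ℝ :=
  if w = fun _ => 0 then 0 else sInf {β : ℝ | 1 < β ∧ fword w β ≤ 1}

/-- `B̄(w) = sup_{j ≥ 0} B̂(σ^j w)`. -/
noncomputable def Bbar (w : ℕ → ℕ) : ℝ := ⨆ j : ℕ, Bhat (shift j w)

/-- The sequence `A_i` in the β-expansion of `β`: `A_0 = β`, `A_{i+1} = β (A_i - ⌊A_i⌋)`. -/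
noncomputable def betaA (β : ℝ) : ℕ → ℝ
  | 0 => β
  | i + 1 => β * (betaA β i - (⌊betaA β i⌋₊ : ℝ))

/-- The β-expansion of `β`: the word `a` with `a_i = ⌊A_i⌋`. -/
noncomputable def betaExp (β : ℝ) : ℕ → ℕ := fun i => ⌊betaA β i⌋₊

/-- The domain `W(β)` of the β-shift: all words `w` with `σ^k w < a` lexicographically
for every `k ≥ 0`, where `a` is the β-expansion of `β`. -/
def Wset (β : ℝ) : Set (ℕ → ℕ) :=
  {w | IsWord w ∧ ∀ k : ℕ, LexLt (shift k w) (betaExp β)}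

/-- `π` is a permutation of `{1, …, n}` (viewed as a map `ℕ → ℕ`). -/
def IsPerm (n : ℕ) (π : ℕ → ℕ) : Prop := Set.BijOn π (Set.Icc 1 n) (Set.Icc 1 n)

/-- The word `w` induces the permutation `π` of `{1, …, n}`: for all `1 ≤ i, j ≤ n`,
`π(i) < π(j)` iff `σ^{i-1} w < σ^{j-1} w` lexicographically. -/
def Induces (n : ℕ) (w : ℕ → ℕ) (π : ℕ → ℕ) : Prop :=
  ∀ i ∈ Set.Icc 1 n, ∀ j ∈ Set.Icc 1 n,
    (π i < π j ↔ LexLt (shift (i - 1) w) (shift (j - 1) w))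

/-- `π ∈ Al(Σ_β)`: some word in `W(β)` induces `π`. -/
def Allowed (β : ℝ) (n : ℕ) (π : ℕ → ℕ) : Prop := ∃ w ∈ Wset β, Induces n w π

/-- The shift-complexity `B(π) = inf {β > 1 : π ∈ Al(Σ_β)}`. -/
noncomputable def Bperm (n : ℕ) (π : ℕ → ℕ) : ℝ :=
  sInf {β : ℝ | 1 < β ∧ Allowed β n π}

/-- `ρ_m` is the permutation `1 m 2 (m-1) 3 (m-2) …` of `{1, …, m}`:
`ρ(2i-1) = i` and `ρ(2i) = m+1-i`. -/
def IsRho (m : ℕ) (ρ : ℕ → ℕ) : Prop :=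
  IsPerm m ρ ∧ (∀ i, 1 ≤ i → 2 * i - 1 ≤ m → ρ (2 * i - 1) = i) ∧
    (∀ i, 1 ≤ i → 2 * i ≤ m → ρ (2 * i) = m + 1 - i)

/-!
Allowedness is monotone in `β`, since the greedy expansion of `β` increases lexicographically
with `β`, and it holds once `β ≥ n + 1`. What remains is openness on the left: if `π` is allowed
at `β > 1`, then also at some `β' < β`.

Cut a witnessing word off to finite support: it stays in `W(β)` and, cut far enough out, still
induces `π`. As `β' → β⁻` the greedy digits of `β'` converge digitwise to the quasi-greedy
expansion of `β` (digit `⌈x⌉ - 1` instead of `⌊x⌋`, so remainders stay positive). It equals the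
greedy expansion unless that one is finite, `a₀ … a_T 0 0 …`, in which case it is the periodic
word `(a₀ … a_{T-1} (a_T - 1))^ω`, and a finitely supported word whose shifts all lie below the
greedy expansion lies below this periodic word too. A finitely supported word below the
quasi-greedy expansion is decided by finitely many digits, hence lies in `W(β')` for `β'` close to
`β` from the left.
-/

open Filter Topology

-- `LexLt v w` unfolds to `toLex v < toLex w`, so the linear order on `Lex (ℕ → ℕ)` applies to it.

theorem shift_shift (k l : ℕ) (u : ℕ → ℕ) : shift k (shift l u) = shift (k + l) u := by
  funext i
  simp only [shift, Nat.add_assoc]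

theorem LexLt.exists_prefix {u v : ℕ → ℕ} (h : LexLt u v) :
    ∃ L, ∀ u' v' : ℕ → ℕ, (∀ j < L, u' j = u j) → (∀ j < L, v' j = v j) → LexLt u' v' := by
  obtain ⟨i, hagree, hlt⟩ := h
  refine ⟨i + 1, fun u' v' hu hv => ⟨i, fun j hj => ?_, ?_⟩⟩
  · rw [hu j (by omega), hv j (by omega), hagree j hj]
  · rw [hu i (by omega), hv i (by omega)]
    exact hlt

theorem lexLt_of_lexLt_shift {u v : ℕ → ℕ} {p : ℕ} (hpre : ∀ j < p, u j = v j)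
    (h : LexLt (shift p u) (shift p v)) : LexLt u v := by
  obtain ⟨e, hagree, hlt⟩ := h
  refine ⟨e + p, fun j hj => ?_, hlt⟩
  rcases lt_or_ge j p with hjp | hjp
  · exact hpre j hjp
  · simpa [shift, Nat.sub_add_cancel hjp] using hagree (j - p) (by omega)

theorem induces_of_forall_lt {n : ℕ} {w π : ℕ → ℕ} (hπ : Set.InjOn π (Set.Icc 1 n))
    (h : ∀ i ∈ Set.Icc 1 n, ∀ j ∈ Set.Icc 1 n, π i < π j →
      LexLt (shift (i - 1) w) (shift (j - 1) w)) : Induces n w π := by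
  intro i hi j hj
  refine ⟨h i hi j hj, fun hlex => ?_⟩
  rcases lt_trichotomy (π i) (π j) with hij | hij | hij
  · exact hij
  · cases hπ hi hj hij
    exact absurd hlex (lt_irrefl (toLex (shift (i - 1) w)))
  · exact absurd hlex (lt_asymm (α := Lex (ℕ → ℕ)) (h j hj i hi hij))

def trunc (m : ℕ) (w : ℕ → ℕ) : ℕ → ℕ := fun i => if i < m then w i else 0

theorem trunc_of_lt {m i : ℕ} (w : ℕ → ℕ) (h : i < m) : trunc m w i = w i := if_pos h

theorem trunc_of_le {m i : ℕ} (w : ℕ → ℕ) (h : m ≤ i) : trunc m w i = 0 := if_neg (by omega)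

theorem trunc_le (m : ℕ) (w : ℕ → ℕ) : trunc m w ≤ w := fun i => by
  unfold trunc
  split_ifs <;> simp

theorem mem_Wset_of_le {β : ℝ} {v w : ℕ → ℕ} (hw : w ∈ Wset β) (hvw : v ≤ w) : v ∈ Wset β := by
  obtain ⟨⟨M, hM⟩, hlt⟩ := hw
  exact ⟨⟨M, fun i => (hvw i).trans (hM i)⟩,
    fun k => lt_of_le_of_lt (Pi.toLex_monotone fun i => hvw (i + k)) (hlt k)⟩

theorem eventually_induces_trunc {n : ℕ} {w π : ℕ → ℕ} (hπ : Set.InjOn π (Set.Icc 1 n))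
    (hw : Induces n w π) : ∀ᶠ m in atTop, Induces n (trunc m w) π := by
  have hpair : ∀ i ∈ Set.Icc 1 n, ∀ j ∈ Set.Icc 1 n, ∀ᶠ m in atTop, π i < π j →
      LexLt (shift (i - 1) (trunc m w)) (shift (j - 1) (trunc m w)) := by
    intro i hi j hj
    by_cases hij : π i < π j
    · obtain ⟨L, hL⟩ := ((hw i hi j hj).1 hij).exists_prefix
      have := hi.2
      have := hj.2
      filter_upwards [eventually_ge_atTop (L + n)] with m hm _
      exact hL _ _ (fun l _ => trunc_of_lt w (by omega)) (fun l _ => trunc_of_lt w (by omega))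
    · exact Eventually.of_forall fun _ h => absurd h hij
  filter_upwards [(Set.finite_Icc 1 n).eventually_all.2 fun i hi =>
    (Set.finite_Icc 1 n).eventually_all.2 (hpair i hi)] with m hm
  exact induces_of_forall_lt hπ hm

theorem betaA_succ (β : ℝ) (i : ℕ) : betaA β (i + 1) = β * (betaA β i - betaExp β i) := rfl

theorem betaA_nonneg {β : ℝ} (hβ : 0 ≤ β) (i : ℕ) : 0 ≤ betaA β i := by
  induction i with
  | zero => exact hβ
  | succ i ih => exact mul_nonneg hβ (sub_nonneg.2 (Nat.floor_le ih))

theorem betaA_lt_betaA {β₁ β₂ : ℝ} (h₁ : 0 < β₁) (h : β₁ < β₂) {i : ℕ}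
    (hagree : ∀ j < i, betaExp β₁ j = betaExp β₂ j) : betaA β₁ i < betaA β₂ i := by
  induction i with
  | zero => exact h
  | succ i ih =>
    have hA := ih fun j hj => hagree j (by omega)
    have hfl : (betaExp β₁ i : ℝ) ≤ betaA β₁ i := Nat.floor_le (betaA_nonneg h₁.le i)
    rw [betaA_succ, betaA_succ, ← hagree i (by omega)]
    calc β₁ * (betaA β₁ i - betaExp β₁ i) ≤ β₂ * (betaA β₁ i - betaExp β₁ i) :=
          mul_le_mul_of_nonneg_right h.le (sub_nonneg.2 hfl)
      _ < β₂ * (betaA β₂ i - betaExp β₁ i) :=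
          mul_lt_mul_of_pos_left (by linarith) (by linarith)

theorem betaExp_monotoneOn : MonotoneOn (fun β => toLex (betaExp β)) (Set.Ioi 0) := by
  intro β₁ h₁ β₂ _ hle
  rcases hle.eq_or_lt with rfl | hlt
  · rfl
  refine not_lt.1 fun ⟨i, hagree, hi⟩ => ?_
  have := betaA_lt_betaA h₁ hlt fun j hj => (hagree j hj).symm
  exact absurd (Nat.floor_le_floor this.le) (not_le.2 hi)

theorem Wset_mono {β₁ β₂ : ℝ} (h₁ : 0 < β₁) (hle : β₁ ≤ β₂) : Wset β₁ ⊆ Wset β₂ :=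
  fun _ ⟨hw, hlt⟩ => ⟨hw, fun k =>
    lt_of_lt_of_le (hlt k) (betaExp_monotoneOn h₁ (h₁.trans_le hle) hle)⟩

theorem Allowed.mono {β₁ β₂ : ℝ} {n : ℕ} {π : ℕ → ℕ} (h₁ : 0 < β₁) (hle : β₁ ≤ β₂)
    (h : Allowed β₁ n π) : Allowed β₂ n π :=
  let ⟨w, hw, hind⟩ := h
  ⟨w, Wset_mono h₁ hle hw, hind⟩

theorem allowed_of_le {n : ℕ} {π : ℕ → ℕ} (hπ : IsPerm n π) {β : ℝ} (hβ : (n : ℝ) + 1 ≤ β) :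
    Allowed β n π := by
  have hw : ∀ k, trunc n (fun k => π (k + 1)) k ≤ n := fun k => by
    by_cases hk : k < n
    · rw [trunc_of_lt _ hk]
      exact (hπ.mapsTo ⟨by omega, by omega⟩).2
    · rw [trunc_of_le _ (not_lt.1 hk)]
      exact Nat.zero_le n
  have hdigit : n + 1 ≤ betaExp β 0 := Nat.le_floor (by push_cast; exact hβ)
  have hfirst : ∀ i ∈ Set.Icc 1 n, shift (i - 1) (trunc n fun k => π (k + 1)) 0 = π i :=
    fun i ⟨hi1, hin⟩ => by
      rw [shift, Nat.zero_add, trunc_of_lt _ (by omega), Nat.sub_add_cancel hi1]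
  refine ⟨_, ⟨⟨n, hw⟩, fun k => ⟨0, nofun, (hw _).trans_lt hdigit⟩⟩,
    induces_of_forall_lt hπ.injOn fun i hi j hj hij => ⟨0, nofun, ?_⟩⟩
  rwa [hfirst i hi, hfirst j hj]

noncomputable def quasiGreedyRem (β : ℝ) : ℕ → ℝ
  | 0 => β
  | i + 1 => β * (quasiGreedyRem β i - (⌈quasiGreedyRem β i⌉₊ - 1 : ℕ))

noncomputable def quasiGreedyExp (β : ℝ) (i : ℕ) : ℕ := ⌈quasiGreedyRem β i⌉₊ - 1

theorem quasiGreedyRem_succ (β : ℝ) (i : ℕ) :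
    quasiGreedyRem β (i + 1) = β * (quasiGreedyRem β i - quasiGreedyExp β i) := rfl

theorem mem_Ioc_natCeil_sub_one {x : ℝ} (hx : 0 < x) :
    x ∈ Set.Ioc ((⌈x⌉₊ - 1 : ℕ) : ℝ) ((⌈x⌉₊ - 1 : ℕ) + 1) := by
  have hpos := Nat.ceil_pos.2 hx
  have := (Nat.ceil_eq_iff (a := x) (n := ⌈x⌉₊ - 1 + 1) (by omega)).1 (by omega)
  simpa using this

theorem quasiGreedyRem_pos {β : ℝ} (hβ : 0 < β) (i : ℕ) : 0 < quasiGreedyRem β i := by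
  induction i with
  | zero => exact hβ
  | succ i ih => exact mul_pos hβ (sub_pos.2 (mem_Ioc_natCeil_sub_one ih).1)

theorem quasiGreedyExp_lt {β : ℝ} (hβ : 0 < β) (i : ℕ) :
    (quasiGreedyExp β i : ℝ) < quasiGreedyRem β i :=
  (mem_Ioc_natCeil_sub_one (quasiGreedyRem_pos hβ i)).1

theorem quasiGreedyRem_le {β : ℝ} (hβ : 0 < β) (i : ℕ) :
    quasiGreedyRem β i ≤ quasiGreedyExp β i + 1 :=
  (mem_Ioc_natCeil_sub_one (quasiGreedyRem_pos hβ i)).2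

theorem eventually_betaExp_eq_of_tendsto {β : ℝ} (hβ : 0 < β) {i : ℕ}
    (h : Tendsto (fun β' => betaA β' i) (𝓝[<] β) (𝓝[<] (quasiGreedyRem β i))) :
    ∀ᶠ β' in 𝓝[<] β, betaExp β' i = quasiGreedyExp β i :=
  (h.eventually_mem (Ioo_mem_nhdsLT (quasiGreedyExp_lt hβ i))).mono fun _ hA =>
    (Nat.floor_eq_iff ((Nat.cast_nonneg _).trans hA.1.le)).2
      ⟨hA.1.le, hA.2.trans_le (quasiGreedyRem_le hβ i)⟩

theorem tendsto_betaA_quasiGreedyRem {β : ℝ} (hβ : 0 < β) (i : ℕ) :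
    Tendsto (fun β' => betaA β' i) (𝓝[<] β) (𝓝[<] (quasiGreedyRem β i)) := by
  induction i with
  | zero => exact tendsto_id
  | succ i ih =>
    have hdigit := eventually_betaExp_eq_of_tendsto hβ ih
    have hrem : ∀ᶠ β' in 𝓝[<] β,
        betaA β' i ∈ Set.Ioo (quasiGreedyExp β i : ℝ) (quasiGreedyRem β i) :=
      ih.eventually_mem (Ioo_mem_nhdsLT (quasiGreedyExp_lt hβ i))
    have hβ' : ∀ᶠ β' in 𝓝[<] β, β' ∈ Set.Ioo 0 β := Ioo_mem_nhdsLT hβ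
    have hlim : Tendsto (fun β' => β' * (betaA β' i - quasiGreedyExp β i)) (𝓝[<] β)
        (𝓝 (quasiGreedyRem β (i + 1))) :=
      (tendsto_nhdsWithin_of_tendsto_nhds tendsto_id).mul
        ((tendsto_nhdsWithin_iff.1 ih).1.sub_const _)
    refine tendsto_nhdsWithin_iff.2 ⟨hlim.congr' ?_, ?_⟩
    · filter_upwards [hdigit] with β' h
      rw [betaA_succ, h]
    · filter_upwards [hdigit, hrem, hβ'] with β' h hA hβ'
      rw [Set.mem_Iio, betaA_succ, h, quasiGreedyRem_succ]
      exact mul_lt_mul'' hβ'.2 (sub_lt_sub_right hA.2 _) hβ'.1.le (sub_pos.2 hA.1).le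

theorem eventually_betaExp_eq_quasiGreedyExp {β : ℝ} (hβ : 0 < β) (L : ℕ) :
    ∀ᶠ β' in 𝓝[<] β, ∀ j < L, betaExp β' j = quasiGreedyExp β j :=
  (Set.finite_Iio L).eventually_all.2 fun j _ =>
    eventually_betaExp_eq_of_tendsto hβ (tendsto_betaA_quasiGreedyRem hβ j)

theorem natCeil_sub_one_eq_natFloor {x : ℝ} (h : (⌊x⌋₊ : ℝ) < x) : ⌈x⌉₊ - 1 = ⌊x⌋₊ := by
  have : ⌈x⌉₊ = ⌊x⌋₊ + 1 :=
    (Nat.ceil_eq_iff (Nat.add_one_ne_zero _)).2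
      ⟨by simpa using h, by exact_mod_cast (Nat.lt_floor_add_one x).le⟩
  omega

theorem quasiGreedyRem_eq_betaA {β : ℝ} {i : ℕ} (h : ∀ j < i, (betaExp β j : ℝ) < betaA β j) :
    quasiGreedyRem β i = betaA β i := by
  induction i with
  | zero => rfl
  | succ i ih =>
    have hi := ih fun j hj => h j (by omega)
    have hexp : quasiGreedyExp β i = betaExp β i := by
      rw [quasiGreedyExp, hi]
      exact natCeil_sub_one_eq_natFloor (h i (by omega))
    rw [quasiGreedyRem_succ, betaA_succ, hi, hexp]

theorem quasiGreedyExp_eq_betaExp {β : ℝ} {i : ℕ} (h : ∀ j ≤ i, (betaExp β j : ℝ) < betaA β j) :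
    quasiGreedyExp β i = betaExp β i := by
  rw [quasiGreedyExp, quasiGreedyRem_eq_betaA fun j hj => h j hj.le]
  exact natCeil_sub_one_eq_natFloor (h i le_rfl)

theorem shift_quasiGreedyExp {β : ℝ} {p : ℕ} (hp : quasiGreedyRem β p = β) :
    shift p (quasiGreedyExp β) = quasiGreedyExp β := by
  have hrem : ∀ j, quasiGreedyRem β (j + p) = quasiGreedyRem β j := by
    intro j
    induction j with
    | zero => rw [Nat.zero_add, hp]; rfl
    | succ j ih => simp only [Nat.add_right_comm j 1 p, quasiGreedyRem_succ, quasiGreedyExp, ih]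
  funext j
  simp only [shift, quasiGreedyExp, hrem]

theorem betaA_eq_zero_of_le {β : ℝ} {i j : ℕ} (h : betaA β i = 0) (hij : i ≤ j) :
    betaA β j = 0 := by
  induction j, hij using Nat.le_induction with
  | base => exact h
  | succ j _ ih => rw [betaA_succ, betaExp, ih, Nat.floor_zero, Nat.cast_zero, sub_zero, mul_zero]

/-- Here `b = (a₀ … a_{T-1} (a_T - 1))^ω`; each induction step peels one period off `u`. -/
theorem lexLt_of_forall_shift_lexLt {a b u : ℕ → ℕ} {T m : ℕ} (hb : ∀ j < T, b j = a j)
    (hT : b T + 1 = a T) (ha : ∀ j, T < j → a j = 0) (hper : shift (T + 1) b = b)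
    (hb0 : 0 < b 0) (hu : ∀ i, m ≤ i → u i = 0) (hshift : ∀ k, LexLt (shift k u) a) :
    LexLt u b := by
  induction m using Nat.strong_induction_on generalizing u with
  | _ m ih =>
  rcases Nat.eq_zero_or_pos m with rfl | hm
  · exact ⟨0, nofun, by rw [hu 0 le_rfl]; exact hb0⟩
  obtain ⟨e, hagree, he⟩ := hshift 0
  have hagree' : ∀ j < min e T, u j = b j := fun j hj =>
    (hagree j (by omega)).trans (hb j (by omega)).symm
  have heT : e ≤ T := by
    by_contra h
    have := ha e (by omega)
    exact absurd he (by simp only [this]; omega)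
  rcases heT.lt_or_eq with heT | rfl
  · exact ⟨e, fun j hj => hagree' j (by omega), by rw [hb e heT]; exact he⟩
  rcases (show u e < b e ∨ u e = b e by change u e < a e at he; omega) with hlt | heq
  · exact ⟨e, fun j hj => hagree' j (by omega), hlt⟩
  refine lexLt_of_lexLt_shift (p := e + 1) (fun j hj => ?_) ?_
  · rcases (Nat.lt_succ_iff.1 hj).lt_or_eq with hje | rfl
    · exact hagree' j (by omega)
    · exact heq
  rw [hper]
  exact ih (m - (e + 1)) (by omega) (fun i hi => hu _ (by omega))
    fun k => by rw [shift_shift]; exact hshift _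

theorem lexLt_quasiGreedyExp {β : ℝ} (hβ : 1 < β) {u : ℕ → ℕ} {m : ℕ}
    (hu : ∀ i, m ≤ i → u i = 0) (hshift : ∀ k, LexLt (shift k u) (betaExp β)) :
    LexLt u (quasiGreedyExp β) := by
  by_cases hgreedy : ∀ j, (betaExp β j : ℝ) < betaA β j
  · rw [show quasiGreedyExp β = betaExp β from
      funext fun j => quasiGreedyExp_eq_betaExp fun i _ => hgreedy i]
    exact hshift 0
  push Not at hgreedy
  classical
  set T := Nat.find hgreedy
  have hbefore : ∀ j < T, (betaExp β j : ℝ) < betaA β j := fun j hj =>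
    not_le.1 (Nat.find_min hgreedy hj)
  have hrem : quasiGreedyRem β T = betaA β T := quasiGreedyRem_eq_betaA hbefore
  have hint : (betaExp β T : ℝ) = betaA β T :=
    (Nat.floor_le (betaA_nonneg (by linarith) T)).antisymm (Nat.find_spec hgreedy)
  have hpos : 0 < betaExp β T := by
    exact_mod_cast hint ▸ hrem ▸ quasiGreedyRem_pos (by linarith) T
  have hlast : quasiGreedyExp β T + 1 = betaExp β T := by
    rw [quasiGreedyExp, hrem, ← hint, Nat.ceil_natCast]
    omega
  refine lexLt_of_forall_shift_lexLt (T := T)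
    (fun j hj => quasiGreedyExp_eq_betaExp fun i hi => hbefore i (by omega)) hlast ?_ ?_ ?_
    hu hshift
  · have hzero : betaA β (T + 1) = 0 := by rw [betaA_succ, hint, sub_self, mul_zero]
    intro j hj
    rw [betaExp, betaA_eq_zero_of_le hzero hj, Nat.floor_zero]
  · apply shift_quasiGreedyExp
    have : (quasiGreedyExp β T : ℝ) + 1 = betaA β T := by
      rw [← hint]
      exact_mod_cast hlast
    rw [quasiGreedyRem_succ, hrem, ← this]
    ring
  · have : 1 < ⌈β⌉₊ := Nat.lt_ceil.2 (by exact_mod_cast hβ)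
    change 0 < ⌈β⌉₊ - 1
    omega

theorem eventually_mem_Wset {β : ℝ} (hβ : 0 < β) {u : ℕ → ℕ} {m : ℕ} (hw : IsWord u)
    (hu : ∀ i, m ≤ i → u i = 0) (hshift : ∀ k, LexLt (shift k u) (quasiGreedyExp β)) :
    ∀ᶠ β' in 𝓝[<] β, u ∈ Wset β' := by
  have hk : ∀ k ∈ Set.Iic m, ∀ᶠ β' in 𝓝[<] β, LexLt (shift k u) (betaExp β') := fun k _ => by
    obtain ⟨L, hL⟩ := (hshift k).exists_prefix
    exact (eventually_betaExp_eq_quasiGreedyExp hβ L).mono fun β' h => hL _ _ (fun _ _ => rfl) h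
  filter_upwards [(Set.finite_Iic m).eventually_all.2 hk] with β' h
  refine ⟨hw, fun k => ?_⟩
  rcases le_total k m with hkm | hmk
  · exact h k hkm
  · have : shift k u = shift m u := funext fun i => by
      simp only [shift, hu _ (show m ≤ i + k by omega), hu _ (show m ≤ i + m by omega)]
    exact this ▸ h m Set.self_mem_Iic

theorem Allowed.exists_lt {β : ℝ} {n : ℕ} {π : ℕ → ℕ} (hπ : Set.InjOn π (Set.Icc 1 n))
    (hβ : 1 < β) (h : Allowed β n π) : ∃ β' ∈ Set.Ioo 1 β, Allowed β' n π := by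
  obtain ⟨w, hw, hind⟩ := h
  obtain ⟨m, hm⟩ := (eventually_induces_trunc hπ hind).exists
  have hu : trunc m w ∈ Wset β := mem_Wset_of_le hw (trunc_le m w)
  have hzero : ∀ i, m ≤ i → trunc m w i = 0 := fun _ => trunc_of_le w
  have hlt : ∀ k, LexLt (shift k (trunc m w)) (quasiGreedyExp β) := fun k =>
    lexLt_quasiGreedyExp hβ (m := m - k) (fun i hi => hzero _ (by omega)) fun l => by
      rw [shift_shift]
      exact hu.2 _
  obtain ⟨β', hβ'u, hβ'⟩ :=
    ((eventually_mem_Wset (by linarith) hu.1 hzero hlt).and (Ioo_mem_nhdsLT hβ)).exists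
  exact ⟨β', hβ', _, hβ'u, hm⟩

theorem stmt_2_general (n : ℕ) (π : ℕ → ℕ) (hπ : IsPerm n π) :
    (∀ β : ℝ, 1 < β → (Allowed β n π ↔ Bperm n π < β)) ∧
      (1 < Bperm n π → ¬ Allowed (Bperm n π) n π) := by
  set S := {β : ℝ | 1 < β ∧ Allowed β n π}
  have hS : S.Nonempty := ⟨n + 2, by linarith [(n.cast_nonneg : (0 : ℝ) ≤ n)],
    allowed_of_le hπ (by linarith)⟩
  have hbdd : BddBelow S := ⟨1, fun _ h => h.1.le⟩
  have hiff : ∀ β : ℝ, 1 < β → (Allowed β n π ↔ Bperm n π < β) := fun β hβ => by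
    refine ⟨fun h => ?_, fun h => ?_⟩
    · obtain ⟨β', hβ', h'⟩ := h.exists_lt hπ.injOn hβ
      exact (csInf_le hbdd ⟨hβ'.1, h'⟩).trans_lt hβ'.2
    · obtain ⟨γ, hγ, hγβ⟩ := exists_lt_of_csInf_lt hS h
      exact hγ.2.mono (by linarith [hγ.1]) hγβ.le
  exact ⟨hiff, fun h1 h => lt_irrefl _ ((hiff _ h1).1 h)⟩

/-- For every `n ≥ 2`, permutation `π` of `{1,…,n}`, and real `β > 1`:
`π ∈ Al(Σ_β)` iff `β > B(π)`. In particular, if `B(π) > 1` then `π ∉ Al(Σ_{B(π)})`,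
so the infimum defining `B(π)` is never attained. -/
theorem stmt_2 (n : ℕ) (hn : 2 ≤ n) (π : ℕ → ℕ) (hπ : IsPerm n π) :
    (∀ β : ℝ, 1 < β → (Allowed β n π ↔ Bperm n π < β)) ∧
      (1 < Bperm n π → ¬ Allowed (Bperm n π) n π) :=
  stmt_2_general n π hπ
end

section
/- For every n ≥ 2 and every permutation π of {1,…,n}, let N(π) denote the least integer N ≥ 2 such that π ∈ Al(Σ_N). Then N(π) = ⌊B(π)⌋ + 1. -/
/-!
Digits of a word in `W(β)` are at most `⌊β⌋`, so a pattern allowed for some `β < N - 1` is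
already allowed in the full `(N - 1)`-shift; hence `N(π) - 1 ≤ B(π)`. Conversely, a word of the
full `N`-shift inducing `π` may be cut off after finitely many letters without changing the
relative order of its first `n` shifts, and the truncated word lies in `W(β)` for every `β < N`
close enough to `N` that the `β`-expansion of `β` starts with many digits `N - 1`; hence
`B(π) < N(π)`.
-/

open Filter

lemma lexLt_irrefl (w : ℕ → ℕ) : ¬ LexLt w w := by
  rintro ⟨i, -, hi⟩
  exact lt_irrefl _ hi

lemma LexLt.asymm {v w : ℕ → ℕ} (hvw : LexLt v w) : ¬ LexLt w v := by
  rintro ⟨j, hpj, hj⟩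
  obtain ⟨i, hpi, hi⟩ := hvw
  rcases lt_trichotomy i j with h | rfl | h
  · exact (hpj i h ▸ hi).false
  · exact (hi.trans hj).false
  · exact (hpi j h ▸ hj).false

lemma lexLt_of_le_of_eq_const {u a : ℕ → ℕ} {c K : ℕ} (hu : ∀ i, u i ≤ c)
    (ha : ∀ i ≤ K, a i = c) (hK : u K < c) : LexLt u a := by
  classical
  have hex : ∃ r, u r < c := ⟨K, hK⟩
  have hfind : Nat.find hex ≤ K := Nat.find_min' hex hK
  refine ⟨Nat.find hex, fun j hj => ?_, (ha _ hfind).symm ▸ Nat.find_spec hex⟩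
  have := Nat.find_min hex hj
  rw [ha j (by omega)]
  exact le_antisymm (hu j) (not_lt.mp this)

lemma betaExp_natCast (m : ℕ) : betaExp (m : ℝ) = fun i => if i = 0 then m else 0 := by
  have hA : ∀ k, betaA (m : ℝ) (k + 1) = 0 := by
    intro k
    induction k with
    | zero => simp [betaA]
    | succ k ih => rw [betaA, ih]; simp
  funext i
  cases i with
  | zero => simp [betaExp, betaA]
  | succ k => simp [betaExp, hA]

lemma mem_Wset_natCast_iff (m : ℕ) (w : ℕ → ℕ) :
    w ∈ Wset (m : ℝ) ↔ IsWord w ∧ ∀ k, w k < m := by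
  refine and_congr_right fun _ => forall_congr' fun k => ⟨fun ⟨i, _, hlt⟩ => ?_, fun h => ?_⟩
  · rw [betaExp_natCast] at hlt
    cases i with
    | zero => simpa [shift] using hlt
    | succ i => simp at hlt
  · exact ⟨0, fun j hj => absurd hj j.not_lt_zero, by simpa [shift, betaExp_natCast] using h⟩

lemma le_floor_of_mem_Wset {β : ℝ} {w : ℕ → ℕ} (hw : w ∈ Wset β) (k : ℕ) : w k ≤ ⌊β⌋₊ := by
  obtain ⟨i, hpre, hlt⟩ := hw.2 k
  have h0 : betaExp β 0 = ⌊β⌋₊ := rfl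
  cases i with
  | zero => simpa [shift, h0] using hlt.le
  | succ i => simpa [shift, h0] using (hpre 0 i.succ_pos).le

lemma Allowed.natCast_of_lt {β : ℝ} {n m : ℕ} {π : ℕ → ℕ} (h : Allowed β n π) (hβ : 0 ≤ β)
    (hβm : β < m) : Allowed (m : ℝ) n π := by
  obtain ⟨w, hw, hind⟩ := h
  refine ⟨w, (mem_Wset_natCast_iff m w).mpr ⟨hw.1, fun k => ?_⟩, hind⟩
  exact (le_floor_of_mem_Wset hw k).trans_lt ((Nat.floor_lt hβ).mpr hβm)

lemma floor_eq_pred_of_sub_mem_Ioc {N : ℕ} (hN : 1 ≤ N) {x : ℝ} (hx : (N : ℝ) - x ∈ Set.Ioc 0 1) :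
    ⌊x⌋₊ = N - 1 := by
  have hN' : (1 : ℝ) ≤ N := by exact_mod_cast hN
  rw [Nat.floor_eq_iff (by linarith [hx.2]), Nat.cast_sub hN]
  push_cast
  constructor <;> linarith [hx.1, hx.2]

/-- For `β = N - d` the deviations `e_i = N - A_i` obey `e_{i+1} = d + β e_i`, so they stay in
`(0, d (N + 1)^i]` as long as they are at most `1`, i.e. as long as the digit `⌊A_i⌋` is `N - 1`. -/
lemma sub_betaA_mem_Ioc {N : ℕ} (hN : 1 ≤ N) {d : ℝ} (hd : 0 < d) {K : ℕ}
    (hK : d * (N + 1) ^ K ≤ 1) :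
    ∀ i ≤ K, (N : ℝ) - betaA (N - d) i ∈ Set.Ioc 0 (d * (N + 1) ^ i) := by
  have hN' : (1 : ℝ) ≤ N := by exact_mod_cast hN
  have hdN : d ≤ N := by
    nlinarith [one_le_pow₀ (M₀ := ℝ) (a := N + 1) (n := K) (by linarith)]
  intro i
  induction i with
  | zero => intro _; simp [betaA, hd]
  | succ i ih =>
    intro hi
    obtain ⟨he0, he⟩ := ih (by omega)
    have hpow : (N + 1 : ℝ) ^ i ≤ (N + 1) ^ K := pow_le_pow_right₀ (by linarith) (by omega)
    have hpow1 : (1 : ℝ) ≤ (N + 1) ^ i := one_le_pow₀ (by linarith)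
    set e := (N : ℝ) - betaA (N - d) i
    have hA : betaA (N - d) i = N - e := by ring
    have hfloor : ⌊betaA (N - d) i⌋₊ = N - 1 :=
      floor_eq_pred_of_sub_mem_Ioc hN ⟨he0, by nlinarith⟩
    rw [betaA, hfloor, Nat.cast_sub hN, hA, pow_succ]
    push_cast
    constructor <;> nlinarith

lemma exists_betaExp_eq_pred {N : ℕ} (hN : 2 ≤ N) (K : ℕ) :
    ∃ β : ℝ, 1 < β ∧ β < N ∧ ∀ i ≤ K, betaExp β i = N - 1 := by
  have hN' : (2 : ℝ) ≤ N := by exact_mod_cast hN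
  set d : ℝ := ((N + 1) ^ (K + 1))⁻¹ with hd_def
  have hpow : (N + 1 : ℝ) ^ K ≤ (N + 1) ^ (K + 1) := pow_le_pow_right₀ (by linarith) K.le_succ
  have hd : 0 < d := by positivity
  have hd1 : d < 1 := inv_lt_one_of_one_lt₀ (one_lt_pow₀ (by linarith) K.succ_ne_zero)
  have hK : d * (N + 1) ^ K ≤ 1 := by
    rw [hd_def, inv_mul_le_one₀ (by positivity)]
    exact hpow
  refine ⟨N - d, by linarith, by linarith, fun i hi => ?_⟩
  obtain ⟨he0, he⟩ := sub_betaA_mem_Ioc (by omega) hd hK i hi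
  have : d * (N + 1) ^ i ≤ d * (N + 1) ^ K :=
    mul_le_mul_of_nonneg_left (pow_le_pow_right₀ (by linarith) hi) hd.le
  exact floor_eq_pred_of_sub_mem_Ioc (by omega) ⟨he0, by linarith⟩

def truncate (M : ℕ) (w : ℕ → ℕ) : ℕ → ℕ := fun j => if j < M then w j else 0

lemma LexLt.eventually_truncate {w : ℕ → ℕ} {a b : ℕ} (h : LexLt (shift a w) (shift b w)) :
    ∀ᶠ M in atTop, LexLt (shift a (truncate M w)) (shift b (truncate M w)) := by
  obtain ⟨i, hpre, hi⟩ := h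
  filter_upwards [eventually_gt_atTop (i + a + b)] with M hM
  refine ⟨i, fun j hj => ?_, ?_⟩
  · simpa [shift, truncate, show j + a < M by omega, show j + b < M by omega] using hpre j hj
  · simpa [shift, truncate, show i + a < M by omega, show i + b < M by omega] using hi

/-- The converse direction holds because `π` is injective, so any two of the shifts of `w` are
comparable. -/
lemma Induces.of_lexLt_imp {n : ℕ} {w w' π : ℕ → ℕ} (hπ : Set.InjOn π (Set.Icc 1 n))
    (hw : Induces n w π) (h : ∀ i ∈ Set.Icc 1 n, ∀ j ∈ Set.Icc 1 n,
      LexLt (shift (i - 1) w) (shift (j - 1) w) → LexLt (shift (i - 1) w') (shift (j - 1) w')) :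
    Induces n w' π := by
  intro i hi j hj
  refine ⟨fun hlt => h i hi j hj ((hw i hi j hj).mp hlt), fun hlt => ?_⟩
  rcases lt_trichotomy (π i) (π j) with hij | hij | hij
  · exact hij
  · exact absurd (hπ hi hj hij ▸ hlt) (lexLt_irrefl _)
  · exact absurd hlt (h j hj i hi ((hw j hj i hi).mp hij)).asymm

lemma Induces.eventually_truncate {n : ℕ} {w π : ℕ → ℕ} (hπ : Set.InjOn π (Set.Icc 1 n))
    (hw : Induces n w π) : ∀ᶠ M in atTop, Induces n (truncate M w) π := by
  have hfin := Set.finite_Icc 1 n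
  have : ∀ᶠ M in atTop, ∀ i ∈ Set.Icc 1 n, ∀ j ∈ Set.Icc 1 n,
      LexLt (shift (i - 1) w) (shift (j - 1) w) →
        LexLt (shift (i - 1) (truncate M w)) (shift (j - 1) (truncate M w)) := by
    simp only [eventually_all_finite hfin, eventually_imp_distrib_left]
    exact fun i _ j _ h => h.eventually_truncate
  exact this.mono fun M hM => hw.of_lexLt_imp hπ hM

/-- Every shift of the truncated word is `≤ (N-1)(N-1)…` letterwise and has the letter `0`
at position `M`. -/
lemma exists_truncate_mem_Wset {N : ℕ} (hN : 2 ≤ N) {w : ℕ → ℕ} (hw : ∀ k, w k < N) (M : ℕ) :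
    ∃ β : ℝ, 1 < β ∧ β < N ∧ truncate M w ∈ Wset β := by
  obtain ⟨β, hβ1, hβN, hβ⟩ := exists_betaExp_eq_pred hN M
  have hle : ∀ j, truncate M w j ≤ N - 1 := by
    intro j
    have := hw j
    unfold truncate
    split_ifs <;> omega
  refine ⟨β, hβ1, hβN, ⟨⟨N - 1, hle⟩, fun k => lexLt_of_le_of_eq_const (fun i => hle _) hβ ?_⟩⟩
  simp only [shift, truncate, show ¬ M + k < M by omega, if_false]
  omega

lemma exists_lt_allowed_of_allowed_natCast {n N : ℕ} (hN : 2 ≤ N) {π : ℕ → ℕ}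
    (hπ : Set.InjOn π (Set.Icc 1 n)) (h : Allowed (N : ℝ) n π) :
    ∃ β : ℝ, 1 < β ∧ β < N ∧ Allowed β n π := by
  obtain ⟨w, hwW, hw⟩ := h
  obtain ⟨M, hM⟩ := (hw.eventually_truncate hπ).exists
  obtain ⟨β, hβ1, hβN, hβ⟩ := exists_truncate_mem_Wset hN ((mem_Wset_natCast_iff N w).mp hwW).2 M
  exact ⟨β, hβ1, hβN, truncate M w, hβ, hM⟩

theorem stmt_3_general (n : ℕ) (π : ℕ → ℕ) (hπ : IsPerm n π) (N : ℕ)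
    (hN : IsLeast {m : ℕ | 2 ≤ m ∧ Allowed (m : ℝ) n π} N) :
    (N : ℤ) = ⌊Bperm n π⌋ + 1 := by
  obtain ⟨⟨hN2, hAll⟩, hmin⟩ := hN
  obtain ⟨β₀, hβ₀1, hβ₀N, hβ₀⟩ := exists_lt_allowed_of_allowed_natCast hN2 hπ.injOn hAll
  have hβ₀mem : β₀ ∈ {β : ℝ | 1 < β ∧ Allowed β n π} := ⟨hβ₀1, hβ₀⟩
  have hB_lt : Bperm n π < N := (csInf_le ⟨1, fun β hβ => hβ.1.le⟩ hβ₀mem).trans_lt hβ₀N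
  have hB_ge : (N : ℝ) - 1 ≤ Bperm n π := by
    refine le_csInf ⟨β₀, hβ₀mem⟩ fun b ⟨hb1, hb⟩ => le_of_not_gt fun hbN => ?_
    have hN3 : 3 ≤ N := by exact_mod_cast (show (2 : ℝ) < N by linarith)
    have hsub : ((N - 1 : ℕ) : ℝ) = N - 1 := Nat.cast_pred (by omega)
    have := hmin ⟨by omega, hb.natCast_of_lt (by linarith) (hsub ▸ hbN)⟩
    omega
  have hfloor : ⌊Bperm n π⌋ = (N : ℤ) - 1 :=
    Int.floor_eq_iff.mpr ⟨by push_cast; linarith, by push_cast; linarith⟩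
  omega

/-- For every `n ≥ 2` and permutation `π` of `{1,…,n}`, if `N(π)` is the least
integer `N ≥ 2` such that `π ∈ Al(Σ_N)`, then `N(π) = ⌊B(π)⌋ + 1`. -/
theorem stmt_3 (n : ℕ) (hn : 2 ≤ n) (π : ℕ → ℕ) (hπ : IsPerm n π) (N : ℕ)
    (hN : IsLeast {m : ℕ | 2 ≤ m ∧ Allowed (m : ℝ) n π} N) :
    (N : ℤ) = ⌊Bperm n π⌋ + 1 :=
  stmt_3_general n π hπ N hN
end

section
/- Let n ≥ 2 and let π be a permutation of {1,…,n} with c := π(n) ≠ 1; set k = π^{−1}(c−1) and ℓ = π^{−1}(n), and assume ℓ > k. Let z_1,…,z_{n−1} be nonnegative integers satisfying: for all 1 ≤ i, j ≤ n−1, if z_j ≤ z_i and π(j) > π(i), then π(j+1) > π(i+1) and z_j = z_i. Let w be the word z_1 z_2 … z_{n−1} z_k z_{k+1} … z_{ℓ−2} (z_{ℓ−1}+1) 0^∞. Then σ^s w < σ^{ℓ−1} w lexicographically for every s ≥ 0 with s ≠ ℓ−1. -/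
open Set

theorem lexLt_shift_of_lt {w : ℕ → ℕ} {p q : ℕ} (h : w p < w q) :
    LexLt (shift p w) (shift q w) :=
  ⟨0, by simp, by simpa [shift] using h⟩

theorem lexLt_shift_of_eq {w : ℕ → ℕ} {p q : ℕ} (h : w p = w q)
    (hs : LexLt (shift (p + 1) w) (shift (q + 1) w)) : LexLt (shift p w) (shift q w) := by
  obtain ⟨i, hi, hlt⟩ := hs
  refine ⟨i + 1, fun j hj => ?_, by simpa [shift, add_assoc, add_comm 1] using hlt⟩
  cases j with
  | zero => simpa [shift] using h
  | succ j => simpa [shift, add_assoc, add_comm 1] using hi j (by omega)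

theorem lexLt_zero_left {v : ℕ → ℕ} (hv : v ≠ 0) : LexLt 0 v := by
  classical
  have hex : ∃ i, v i ≠ 0 := Function.ne_iff.mp hv
  refine ⟨Nat.find hex, fun j hj => ?_, Nat.pos_of_ne_zero (Nat.find_spec hex)⟩
  exact (not_not.mp (Nat.find_min hex hj)).symm

def OrderCompatible (n : ℕ) (π z : ℕ → ℕ) : Prop :=
  ∀ i ∈ Icc 1 (n - 1), ∀ j ∈ Icc 1 (n - 1),
    z j ≤ z i → π i < π j → π (i + 1) < π (j + 1) ∧ z j = z i

def zNext (n k i : ℕ) : ℕ := if i < n - 1 then i + 1 else k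

namespace OrderCompatible

variable {n k : ℕ} {π z : ℕ → ℕ} {i j : ℕ}

theorem le (h : OrderCompatible n π z) (hi : i ∈ Icc 1 (n - 1)) (hj : j ∈ Icc 1 (n - 1))
    (hij : π i < π j) : z i ≤ z j := by
  by_contra! hji
  exact (h i hi j hj hji.le hij).2.not_lt hji

theorem succ_lt (h : OrderCompatible n π z) (hi : i ∈ Icc 1 (n - 1)) (hj : j ∈ Icc 1 (n - 1))
    (hij : π i < π j) (heq : z i = z j) : π (i + 1) < π (j + 1) :=
  (h i hi j hj heq.ge hij).1

theorem lt_of_map_succ_eq (h : OrderCompatible n π z) (hπ : MapsTo π (Icc 1 n) (Icc 1 n))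
    (hi : i ∈ Icc 1 (n - 1)) (hj : j ∈ Icc 1 (n - 1)) (hmax : π (i + 1) = n)
    (hij : π i < π j) : z i < z j := by
  refine (h.le hi hj hij).lt_of_ne fun heq => ?_
  have hj1 : j + 1 ∈ Icc 1 n := ⟨j.succ_pos, by have := hj.1; have := hj.2; omega⟩
  exact (h.succ_lt hi hj hij heq).not_ge (hmax ▸ (hπ hj1).2)

theorem zNext_lt (h : OrderCompatible n π z) (hπ : InjOn π (Icc 1 n)) (hk : k ∈ Icc 1 n)
    (hkc : π k = π n - 1) (hi : i ∈ Icc 1 (n - 1)) (hj : j ∈ Icc 1 (n - 1))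
    (hij : π i < π j) (heq : z i = z j) :
    π (zNext n k i) < π (zNext n k j) ∨ (i + 1 = k ∧ j = n - 1) := by
  have hsucc := h.succ_lt hi hj hij heq
  obtain ⟨hi1, hi2⟩ := hi
  obtain ⟨hj1, hj2⟩ := hj
  unfold zNext
  by_cases hin : i < n - 1 <;> by_cases hjn : j < n - 1 <;> simp only [hin, hjn, if_true, if_false]
  · exact .inl hsucc
  · obtain rfl : j = n - 1 := by omega
    rw [Nat.sub_add_cancel (by omega)] at hsucc
    rcases (by omega : π (i + 1) < π k ∨ π (i + 1) = π k) with hlt | heq'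
    · exact .inl hlt
    · exact .inr ⟨hπ ⟨by omega, by omega⟩ hk heq', rfl⟩
  · obtain rfl : i = n - 1 := by omega
    rw [Nat.sub_add_cancel (by omega)] at hsucc
    exact .inl (by omega)
  · obtain rfl : i = j := by omega
    exact absurd hij (lt_irrefl _)

end OrderCompatible

/-- Position `p` of `bumpWord n k ℓ z` before the bump carries the letter `z (zIndex n k p)`. -/
def zIndex (n k p : ℕ) : ℕ := if p < n - 1 then p + 1 else k + (p - (n - 1))

/-- The word `z_1 ⋯ z_{n-1} z_k ⋯ z_{ℓ-2} (z_{ℓ-1}+1) 0^∞`; its bump is at `n + ℓ - k - 2`. -/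
def bumpWord (n k ℓ : ℕ) (z : ℕ → ℕ) : ℕ → ℕ := fun i =>
  if i < n - 1 then z (i + 1)
  else if i < n + ℓ - k - 2 then z (k + (i - (n - 1)))
  else if i = n + ℓ - k - 2 then z (ℓ - 1) + 1
  else 0

def Precedes (n k : ℕ) (π : ℕ → ℕ) (p q : ℕ) : Prop :=
  π (zIndex n k p) < π (zIndex n k q) ∨ (zIndex n k p = zIndex n k q ∧ p < q)

section BumpWord

variable {n k ℓ p q : ℕ} {π z : ℕ → ℕ}

theorem zIndex_mem (hk : 1 ≤ k) (hkℓ : k < ℓ) (hℓn : ℓ ≤ n) (hp : p ≤ n + ℓ - k - 2) :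
    zIndex n k p ∈ Icc 1 (n - 1) := by
  unfold zIndex
  constructor <;> split_ifs <;> omega

theorem zIndex_bump (hkℓ : k < ℓ) (hℓn : ℓ ≤ n) : zIndex n k (n + ℓ - k - 2) = ℓ - 1 := by
  unfold zIndex
  split_ifs <;> omega

theorem zIndex_succ (hkℓ : k < ℓ) (hℓn : ℓ ≤ n) (hp : p < n + ℓ - k - 2) :
    zIndex n k (p + 1) = zNext n k (zIndex n k p) := by
  unfold zIndex zNext
  split_ifs <;> omega

theorem bumpWord_of_lt (hp : p < n + ℓ - k - 2) : bumpWord n k ℓ z p = z (zIndex n k p) := by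
  unfold bumpWord zIndex
  split_ifs <;> rfl

theorem bumpWord_bump (hkℓ : k < ℓ) : bumpWord n k ℓ z (n + ℓ - k - 2) = z (ℓ - 1) + 1 := by
  unfold bumpWord
  rw [if_neg (by omega), if_neg (by omega), if_pos rfl]

theorem bumpWord_of_gt (hkℓ : k < ℓ) (hp : n + ℓ - k - 2 < p) : bumpWord n k ℓ z p = 0 := by
  unfold bumpWord
  split_ifs <;> first | rfl | omega

theorem lexLt_shift_bumpWord_of_gt (hkℓ : k < ℓ) (hp : n + ℓ - k - 2 < p)
    (hq : q ≤ n + ℓ - k - 2) :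
    LexLt (shift p (bumpWord n k ℓ z)) (shift q (bumpWord n k ℓ z)) := by
  have hzero : shift p (bumpWord n k ℓ z) = 0 :=
    funext fun i => bumpWord_of_gt hkℓ (by omega)
  have hne : shift q (bumpWord n k ℓ z) ≠ 0 := fun h => by
    have := congrFun h (n + ℓ - k - 2 - q)
    simp only [shift, Nat.sub_add_cancel hq, bumpWord_bump hkℓ, Pi.zero_apply] at this
    omega
  exact hzero ▸ lexLt_zero_left hne

theorem Precedes.succ (h : OrderCompatible n π z) (hπ : IsPerm n π) (hk : 1 ≤ k) (hkℓ : k < ℓ)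
    (hℓn : ℓ ≤ n) (hkc : π k = π n - 1) (hp : p < n + ℓ - k - 2) (hq : q < n + ℓ - k - 2)
    (hpq : Precedes n k π p q) (heq : z (zIndex n k p) = z (zIndex n k q)) :
    Precedes n k π (p + 1) (q + 1) := by
  unfold Precedes at hpq ⊢
  rw [zIndex_succ hkℓ hℓn hp, zIndex_succ hkℓ hℓn hq]
  rcases hpq with hlt | ⟨hidx, hpq⟩
  · rcases h.zNext_lt hπ.injOn ⟨hk, by omega⟩ hkc (zIndex_mem hk hkℓ hℓn hp.le)
      (zIndex_mem hk hkℓ hℓn hq.le) hlt heq with hlt' | ⟨hpk, hqn⟩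
    · exact .inl hlt'
    · -- the merged successors: `p = k - 2` and `q = n - 2`
      right
      unfold zIndex zNext at *
      split_ifs at * <;> omega
  · exact .inr ⟨by rw [hidx], by omega⟩

theorem bumpWord_lt_bump_of_precedes (h : OrderCompatible n π z) (hk : 1 ≤ k) (hkℓ : k < ℓ)
    (hℓn : ℓ ≤ n) (hp : p ≤ n + ℓ - k - 2) (hpq : Precedes n k π p (n + ℓ - k - 2)) :
    bumpWord n k ℓ z p < bumpWord n k ℓ z (n + ℓ - k - 2) := by
  have hpB : p < n + ℓ - k - 2 := hp.lt_of_ne (by rintro rfl; simp [Precedes] at hpq)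
  rw [bumpWord_of_lt hpB, bumpWord_bump hkℓ, Nat.lt_succ_iff, ← zIndex_bump hkℓ hℓn]
  rcases hpq with hlt | ⟨hidx, -⟩
  · exact h.le (zIndex_mem hk hkℓ hℓn hp) (zIndex_mem hk hkℓ hℓn le_rfl) hlt
  · rw [hidx]

theorem bumpWord_le_of_precedes (h : OrderCompatible n π z) (hπ : IsPerm n π) (hk : 1 ≤ k)
    (hkℓ : k < ℓ) (hℓn : ℓ ≤ n) (hℓ : π ℓ = n) (hp : p ≤ n + ℓ - k - 2)
    (hq : q ≤ n + ℓ - k - 2) (hpq : Precedes n k π p q) :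
    bumpWord n k ℓ z p ≤ bumpWord n k ℓ z q := by
  rcases hq.lt_or_eq with hqB | rfl
  · rcases hp.lt_or_eq with hpB | rfl
    · rw [bumpWord_of_lt hpB, bumpWord_of_lt hqB]
      rcases hpq with hlt | ⟨hidx, -⟩
      · exact h.le (zIndex_mem hk hkℓ hℓn hp) (zIndex_mem hk hkℓ hℓn hq) hlt
      · rw [hidx]
    · rw [bumpWord_bump hkℓ, bumpWord_of_lt hqB]
      have hlt : π (ℓ - 1) < π (zIndex n k q) := by
        rcases hpq with hlt | ⟨-, hqp⟩
        · rwa [zIndex_bump hkℓ hℓn] at hlt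
        · omega
      exact h.lt_of_map_succ_eq hπ.mapsTo ⟨by omega, by omega⟩ (zIndex_mem hk hkℓ hℓn hq)
        (by rwa [Nat.sub_add_cancel (by omega)]) hlt
  · exact (bumpWord_lt_bump_of_precedes h hk hkℓ hℓn hp hpq).le

theorem lexLt_shift_bumpWord_of_precedes (h : OrderCompatible n π z) (hπ : IsPerm n π)
    (hk : 1 ≤ k) (hkℓ : k < ℓ) (hℓn : ℓ ≤ n) (hkc : π k = π n - 1) (hℓ : π ℓ = n) {p q : ℕ}
    (hp : p ≤ n + ℓ - k - 2) (hq : q ≤ n + ℓ - k - 2) (hpq : Precedes n k π p q) :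
    LexLt (shift p (bumpWord n k ℓ z)) (shift q (bumpWord n k ℓ z)) := by
  rcases (bumpWord_le_of_precedes h hπ hk hkℓ hℓn hℓ hp hq hpq).lt_or_eq with hlt | heq
  · exact lexLt_shift_of_lt hlt
  refine lexLt_shift_of_eq heq ?_
  have hqB : q < n + ℓ - k - 2 := hq.lt_of_ne <| by
    rintro rfl
    exact (bumpWord_lt_bump_of_precedes h hk hkℓ hℓn hp hpq).ne heq
  rcases hp.lt_or_eq with hpB | rfl
  · rw [bumpWord_of_lt hpB, bumpWord_of_lt hqB] at heq
    exact lexLt_shift_bumpWord_of_precedes h hπ hk hkℓ hℓn hkc hℓ (by omega) (by omega)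
      (hpq.succ h hπ hk hkℓ hℓn hkc hpB hqB heq)
  · exact lexLt_shift_bumpWord_of_gt hkℓ (by omega) (by omega)
termination_by n + ℓ - k - 2 - q

theorem precedes_sub_one (hπ : IsPerm n π) (hk : 1 ≤ k) (hkℓ : k < ℓ) (hℓn : ℓ ≤ n)
    (hkc : π k = π n - 1) (hℓ : π ℓ = n) (hp : p ≤ n + ℓ - k - 2) (hpℓ : p ≠ ℓ - 1) :
    Precedes n k π p (ℓ - 1) := by
  obtain ⟨hm1, hm2⟩ := zIndex_mem hk hkℓ hℓn hp
  have hne : zIndex n k p ≠ ℓ := by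
    unfold zIndex
    split_ifs <;> omega
  have hlt : π (zIndex n k p) < n := by
    refine (hπ.mapsTo ⟨hm1, by omega⟩).2.lt_of_ne fun heq => hne ?_
    exact hπ.injOn ⟨hm1, by omega⟩ ⟨by omega, hℓn⟩ (heq.trans hℓ.symm)
  rcases hℓn.lt_or_eq with hℓlt | rfl
  · have : zIndex n k (ℓ - 1) = ℓ := by
      unfold zIndex
      split_ifs <;> omega
    exact .inl (by rwa [this, hℓ])
  · have hidx : zIndex ℓ k (ℓ - 1) = k := by simp [zIndex]
    rw [hℓ] at hkc
    rcases (by omega : π (zIndex ℓ k p) < ℓ - 1 ∨ π (zIndex ℓ k p) = ℓ - 1) with hlt' | heq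
    · exact .inl (by rwa [hidx, hkc])
    · have hpk : zIndex ℓ k p = k :=
        hπ.injOn ⟨hm1, by omega⟩ ⟨hk, hkℓ.le⟩ (heq.trans hkc.symm)
      refine .inr ⟨by rw [hpk, hidx], ?_⟩
      unfold zIndex at hpk
      split_ifs at hpk <;> omega

end BumpWord

theorem stmt_5_general (n : ℕ) (π : ℕ → ℕ) (hπ : IsPerm n π)
    (c k ℓ : ℕ) (hc : c = π n)
    (hk : k ∈ Set.Icc 1 n) (hkc : π k = c - 1)
    (hℓ : ℓ ∈ Set.Icc 1 n) (hℓn : π ℓ = n) (hℓk : k < ℓ)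
    (z : ℕ → ℕ)
    (hz : ∀ i ∈ Set.Icc 1 (n - 1), ∀ j ∈ Set.Icc 1 (n - 1),
      z j ≤ z i → π i < π j → π (i + 1) < π (j + 1) ∧ z j = z i)
    (w : ℕ → ℕ)
    (hw : ∀ i : ℕ, w i =
      if i < n - 1 then z (i + 1)
      else if i < n + ℓ - k - 2 then z (k + (i - (n - 1)))
      else if i = n + ℓ - k - 2 then z (ℓ - 1) + 1
      else 0) :
    ∀ s : ℕ, s ≠ ℓ - 1 → LexLt (shift s w) (shift (ℓ - 1) w) := by
  subst hc
  obtain rfl : w = bumpWord n k ℓ z := funext hw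
  obtain ⟨hk1, -⟩ := hk
  obtain ⟨-, hℓle⟩ := hℓ
  intro s hs
  rcases le_or_gt s (n + ℓ - k - 2) with hsB | hsB
  · exact lexLt_shift_bumpWord_of_precedes hz hπ hk1 hℓk hℓle hkc hℓn hsB (by omega)
      (precedes_sub_one hπ hk1 hℓk hℓle hkc hℓn hsB hs)
  · exact lexLt_shift_bumpWord_of_gt hℓk hsB (by omega)

/-- With `c = π(n) ≠ 1`, `k = π⁻¹(c-1)`, `ℓ = π⁻¹(n)`, `ℓ > k`, and
`w = z_1 … z_{n-1} z_k z_{k+1} … z_{ℓ-2} (z_{ℓ-1}+1) 0^∞`, one has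
`σ^s w < σ^{ℓ-1} w` lexicographically for every `s ≠ ℓ-1`. -/
theorem stmt_5 (n : ℕ) (hn : 2 ≤ n) (π : ℕ → ℕ) (hπ : IsPerm n π)
    (c k ℓ : ℕ) (hc : c = π n) (hc1 : c ≠ 1)
    (hk : k ∈ Set.Icc 1 n) (hkc : π k = c - 1)
    (hℓ : ℓ ∈ Set.Icc 1 n) (hℓn : π ℓ = n) (hℓk : k < ℓ)
    (z : ℕ → ℕ)
    (hz : ∀ i ∈ Set.Icc 1 (n - 1), ∀ j ∈ Set.Icc 1 (n - 1),
      z j ≤ z i → π i < π j → π (i + 1) < π (j + 1) ∧ z j = z i)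
    (w : ℕ → ℕ)
    (hw : ∀ i : ℕ, w i =
      if i < n - 1 then z (i + 1)
      else if i < n + ℓ - k - 2 then z (k + (i - (n - 1)))
      else if i = n + ℓ - k - 2 then z (ℓ - 1) + 1
      else 0) :
    ∀ s : ℕ, s ≠ ℓ - 1 → LexLt (shift s w) (shift (ℓ - 1) w) :=
  stmt_5_general n π hπ c k ℓ hc hk hkc hℓ hℓn hℓk z hz w hw
end

section
/- Let n ≥ 2 and let π be a permutation of {1,…,n} with π(n) = 1, and set ℓ = π^{−1}(n). Let w be a word with w_i = 0 for all indices i ≥ n−1 (zero-based), and suppose w induces π. Then: (1) σ^s w < σ^{ℓ−1} w lexicographically for every s ≠ ℓ−1; (2) B̄(w) = B̂(σ^{ℓ−1} w); (3) every word v ≠ w that agrees with w in its first n−1 letters satisfies B̄(v) > B̄(w). -/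
open Finset Filter Topology

lemma shift_shift_s7 (a b : ℕ) (x : ℕ → ℕ) : shift a (shift b x) = shift (a + b) x :=
  funext fun i => congrArg x (add_assoc i a b)

lemma IsWord.shift {x : ℕ → ℕ} (hx : IsWord x) (k : ℕ) : IsWord (shift k x) :=
  let ⟨M, hM⟩ := hx
  ⟨M, fun i => hM (i + k)⟩

lemma isWord_of_eventually_zero {x : ℕ → ℕ} {N : ℕ} (h : ∀ i, N ≤ i → x i = 0) : IsWord x := by
  refine ⟨(range N).sup x, fun i => ?_⟩
  rcases lt_or_ge i N with hi | hi
  · exact le_sup (mem_range.mpr hi)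
  · simp [h i hi]

lemma ne_zero_of_lexLt {v w : ℕ → ℕ} (h : LexLt v w) : w ≠ 0 := by
  rintro rfl
  obtain ⟨i, -, hi⟩ := h
  exact Nat.not_lt_zero _ hi

lemma eq_zero_of_lexLe_zero {v : ℕ → ℕ} (h : LexLe v 0) : v = 0 :=
  h.resolve_left fun hlt => ne_zero_of_lexLt hlt rfl

noncomputable def fwordPartial (x : ℕ → ℕ) (N : ℕ) (β : ℝ) : ℝ :=
  ∑ i ∈ range N, (x i : ℝ) / β ^ (i + 1)

section fword

variable {x : ℕ → ℕ} {β : ℝ}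

lemma div_pow_succ_le_geometric {M : ℕ} (hM : ∀ i, x i ≤ M) (hβ : 0 < β) (i : ℕ) :
    (x i : ℝ) / β ^ (i + 1) ≤ M / β * β⁻¹ ^ i := by
  rw [inv_pow, pow_succ, div_mul_eq_div_div_swap, div_eq_mul_inv _ (β ^ _)]
  gcongr
  exact_mod_cast hM i

lemma summable_fword_of_le {M : ℕ} (hM : ∀ i, x i ≤ M) (hβ : 1 < β) :
    Summable fun i => (x i : ℝ) / β ^ (i + 1) :=
  .of_nonneg_of_le (fun _ => by positivity) (div_pow_succ_le_geometric hM (by linarith))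
    ((summable_geometric_of_lt_one (by positivity) (inv_lt_one_of_one_lt₀ hβ)).mul_left _)

lemma summable_fword (hx : IsWord x) (hβ : 1 < β) :
    Summable fun i => (x i : ℝ) / β ^ (i + 1) :=
  let ⟨_, hM⟩ := hx
  summable_fword_of_le hM hβ

lemma fword_le_of_le {M : ℕ} (hM : ∀ i, x i ≤ M) (hβ : 1 < β) : fword x β ≤ M / (β - 1) := by
  have hβ0 : 0 < β := by linarith
  have hgeom : ∑' i : ℕ, (M : ℝ) / β * β⁻¹ ^ i = M / (β - 1) := by
    rw [tsum_mul_left, tsum_geometric_of_lt_one (by positivity) (inv_lt_one_of_one_lt₀ hβ)]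
    field_simp
  rw [← hgeom]
  exact (summable_fword_of_le hM hβ).tsum_le_tsum (div_pow_succ_le_geometric hM hβ0)
    ((summable_geometric_of_lt_one (by positivity) (inv_lt_one_of_one_lt₀ hβ)).mul_left _)

lemma fword_le_one_of_le {M : ℕ} (hM : ∀ i, x i ≤ M) : fword x (M + 2) ≤ 1 := by
  have hM0 : (0 : ℝ) ≤ M := M.cast_nonneg
  refine (fword_le_of_le hM (by linarith)).trans ?_
  rw [div_le_one (by linarith)]
  linarith

lemma fwordPartial_le_fword (hx : IsWord x) (hβ : 1 < β) (N : ℕ) :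
    fwordPartial x N β ≤ fword x β :=
  (summable_fword hx hβ).sum_le_tsum _ fun i _ => by positivity

lemma fword_eq_fwordPartial {N : ℕ} (h : ∀ i, N ≤ i → x i = 0) (β : ℝ) :
    fword x β = fwordPartial x N β :=
  tsum_eq_sum fun i hi => by simp [h i (by simpa using hi)]

lemma fword_eq_fwordPartial_add (hx : IsWord x) (hβ : 1 < β) (k : ℕ) :
    fword x β = fwordPartial x k β + fword (shift k x) β / β ^ k := by
  rw [fword, ← (summable_fword hx hβ).sum_add_tsum_nat_add k, fword, ← tsum_div_const]
  congr 1
  refine tsum_congr fun i => ?_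
  rw [div_div, ← pow_add, add_right_comm]
  rfl

lemma fword_le_fword_of_le (hx : IsWord x) {β' : ℝ} (hβ : 1 < β) (h : β ≤ β') :
    fword x β' ≤ fword x β :=
  (summable_fword hx (hβ.trans_le h)).tsum_le_tsum (fun i => by gcongr)
    (summable_fword hx hβ)

lemma fwordPartial_le_fwordPartial {β' : ℝ} (N : ℕ) (hβ : 0 < β) (h : β ≤ β') :
    fwordPartial x N β' ≤ fwordPartial x N β :=
  sum_le_sum fun _ _ => by gcongr

lemma continuousAt_fwordPartial (N : ℕ) (hβ : β ≠ 0) :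
    ContinuousAt (fwordPartial x N) β :=
  tendsto_finsetSum _ fun _ _ =>
    continuousAt_const.div (continuousAt_pow _ _) (pow_ne_zero _ hβ)

lemma fwordPartial_lt_of_le_of_lt {y : ℕ → ℕ} {m N : ℕ} (hle : ∀ i, x i ≤ y i)
    (hm : x m < y m) (hmN : m < N) (hβ : 0 < β) :
    fwordPartial x N β < fwordPartial y N β :=
  sum_lt_sum (fun i _ => by gcongr; exact hle i)
    ⟨m, mem_range.mpr hmN, by gcongr⟩

lemma fwordPartial_add_le_of_lt {y : ℕ → ℕ} {k : ℕ} (hagree : ∀ i < k, x i = y i)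
    (hlt : x k < y k) (hβ : 0 < β) :
    fwordPartial x (k + 1) β + 1 / β ^ (k + 1) ≤ fwordPartial y (k + 1) β := by
  have hprefix : fwordPartial x k β = fwordPartial y k β :=
    sum_congr rfl fun i hi => by rw [hagree i (mem_range.mp hi)]
  have hk : (x k : ℝ) + 1 ≤ y k := by exact_mod_cast hlt
  simp only [fwordPartial, sum_range_succ] at hprefix ⊢
  rw [hprefix, add_assoc, ← add_div]
  gcongr

end fword

section Bhat

variable {x : ℕ → ℕ} {β : ℝ}

lemma Bhat_le_of_fword_le_one (hβ : 1 < β) (h : fword x β ≤ 1) : Bhat x ≤ β := by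
  rw [Bhat]
  split_ifs
  · positivity
  · exact csInf_le ⟨1, fun _ hb => hb.1.le⟩ ⟨hβ, h⟩

lemma Bhat_le_of_le {M : ℕ} (hM : ∀ i, x i ≤ M) : Bhat x ≤ M + 2 :=
  Bhat_le_of_fword_le_one (by linarith [M.cast_nonneg (α := ℝ)]) (fword_le_one_of_le hM)

lemma nonempty_fword_le_one (hx : IsWord x) : {β : ℝ | 1 < β ∧ fword x β ≤ 1}.Nonempty :=
  let ⟨M, hM⟩ := hx
  ⟨_, by linarith [M.cast_nonneg (α := ℝ)], fword_le_one_of_le hM⟩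

lemma Bhat_of_ne_zero (h0 : x ≠ 0) : Bhat x = sInf {β : ℝ | 1 < β ∧ fword x β ≤ 1} :=
  if_neg h0

lemma one_le_Bhat (hx : IsWord x) (h0 : x ≠ 0) : 1 ≤ Bhat x := by
  rw [Bhat_of_ne_zero h0]
  exact le_csInf (nonempty_fword_le_one hx) fun _ hb => hb.1.le

lemma fword_le_one_of_Bhat_lt (hx : IsWord x) (h : Bhat x < β) : fword x β ≤ 1 := by
  by_cases h0 : x = 0
  · simp [h0, fword]
  rw [Bhat_of_ne_zero h0] at h
  obtain ⟨c, ⟨hc1, hc⟩, hcβ⟩ := exists_lt_of_csInf_lt (nonempty_fword_le_one hx) h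
  exact (fword_le_fword_of_le hx hc1 hcβ.le).trans hc

lemma lt_Bhat_of_one_lt_fwordPartial (hx : IsWord x) {N : ℕ} (hβ : 0 < β)
    (h : 1 < fwordPartial x N β) : β < Bhat x := by
  obtain ⟨b, hb, hβb⟩ : ∃ b, 1 < fwordPartial x N b ∧ β < b :=
    ((((continuousAt_fwordPartial N hβ.ne').eventually_const_lt h).filter_mono
      nhdsWithin_le_nhds).and self_mem_nhdsWithin).exists (f := 𝓝[>] β)
  have h0 : x ≠ 0 := by
    rintro rfl
    norm_num [fwordPartial] at h
  refine hβb.trans_le ?_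
  rw [Bhat_of_ne_zero h0]
  refine le_csInf (nonempty_fword_le_one hx) fun c ⟨hc1, hc⟩ => ?_
  by_contra! hcb
  have := fwordPartial_le_fwordPartial N (by linarith) hcb.le (x := x)
  linarith [fwordPartial_le_fword hx hc1 N]

lemma one_le_fwordPartial_Bhat {N : ℕ} (hsupp : ∀ i, N ≤ i → x i = 0) (h0 : x ≠ 0) :
    1 ≤ fwordPartial x N (Bhat x) := by
  by_contra! hlt
  rcases (one_le_Bhat (isWord_of_eventually_zero hsupp) h0).eq_or_lt with heq | hgt
  · obtain ⟨i, hi⟩ := Function.ne_iff.mp h0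
    have hiN : i < N := by
      by_contra! hNi
      exact hi (hsupp i hNi)
    have hxi : (1 : ℝ) ≤ x i := by exact_mod_cast Nat.one_le_iff_ne_zero.mpr hi
    have hsingle : (x i : ℝ) ≤ fwordPartial x N 1 := by
      simpa [fwordPartial] using
        single_le_sum (f := fun j => (x j : ℝ)) (fun _ _ => by positivity) (mem_range.mpr hiN)
    rw [← heq] at hlt
    linarith
  · obtain ⟨b, hb, hb1, hbB⟩ : ∃ b, fwordPartial x N b < 1 ∧ b ∈ Set.Ioo 1 (Bhat x) :=
      ((((continuousAt_fwordPartial N (by positivity)).eventually_lt_const hlt).filter_mono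
        nhdsWithin_le_nhds).and (Ioo_mem_nhdsLT hgt)).exists
    have := Bhat_le_of_fword_le_one hb1 ((fword_eq_fwordPartial hsupp b).trans_le hb.le)
    linarith

lemma Bhat_lt_Bhat_of_le_of_ne {y : ℕ → ℕ} {N : ℕ} (hsupp : ∀ i, N ≤ i → x i = 0)
    (h0 : x ≠ 0) (hy : IsWord y) (hle : ∀ i, x i ≤ y i) (hne : x ≠ y) : Bhat x < Bhat y := by
  obtain ⟨m, hm⟩ := Function.ne_iff.mp hne
  have hB : 0 < Bhat x := zero_lt_one.trans_le (one_le_Bhat (isWord_of_eventually_zero hsupp) h0)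
  refine lt_Bhat_of_one_lt_fwordPartial hy hB (N := max N (m + 1)) ?_
  calc 1 ≤ fwordPartial x (max N (m + 1)) (Bhat x) :=
        one_le_fwordPartial_Bhat (fun i hi => hsupp i (le_of_max_le_left hi)) h0
    _ < fwordPartial y (max N (m + 1)) (Bhat x) :=
        fwordPartial_lt_of_le_of_lt hle ((hle m).lt_of_ne hm) (by omega) hB

end Bhat

section Parry

variable {x : ℕ → ℕ} {m : ℕ}

/-- If the lexicographically largest shift `σ^m x` satisfies `f(β) ≤ 1`, so does every shift.
With `S = sup_j f_{σ^j x}(β)`, a shift that first drops below `σ^m x` at position `k` has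
`f ≤ (1 - β^{-(k+1)}) + β^{-(k+1)} S`, so `S > 1` would force `S ≤ 1 + (S - 1)/β`. -/
lemma fword_shift_le_one_of_forall_lexLe (hx : IsWord x) {β : ℝ} (hβ : 1 < β)
    (hmax : ∀ j, LexLe (shift j x) (shift m x)) (hm : fword (shift m x) β ≤ 1) (j : ℕ) :
    fword (shift j x) β ≤ 1 := by
  have hβ0 : 0 < β := by linarith
  have ⟨M, hM⟩ := hx
  have hbdd : BddAbove (Set.range fun j => fword (shift j x) β) :=
    ⟨M / (β - 1), by rintro _ ⟨j, rfl⟩; exact fword_le_of_le (fun i => hM _) hβ⟩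
  set S := ⨆ j, fword (shift j x) β
  have hle_S : ∀ j, fword (shift j x) β ≤ S := le_ciSup hbdd
  by_contra! hj
  have hS : 1 < S := hj.trans_le (hle_S j)
  have hbound : ∀ j, fword (shift j x) β ≤ 1 + (S - 1) / β := by
    intro j
    rcases hmax j with ⟨k, hagree, hlt⟩ | heq
    · have hsplit := fword_eq_fwordPartial_add (hx.shift j) hβ (k + 1)
      have hdrop := fwordPartial_add_le_of_lt hagree hlt hβ0
      have hprefix := fwordPartial_le_fword (hx.shift m) hβ (k + 1)
      have htail := hle_S (k + 1 + j)
      rw [← shift_shift_s7] at htail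
      have hc : 1 / β ^ (k + 1) ≤ 1 / β :=
        one_div_le_one_div_of_le hβ0 (le_self_pow₀ hβ.le (Nat.succ_ne_zero k))
      calc fword (shift j x) β
          = fwordPartial (shift j x) (k + 1) β + fword (shift (k + 1) (shift j x)) β / β ^ (k + 1) :=
            hsplit
        _ ≤ (1 - 1 / β ^ (k + 1)) + S * (1 / β ^ (k + 1)) := by
            rw [div_eq_mul_one_div _ (β ^ _)]
            gcongr
            linarith
        _ = 1 + (S - 1) * (1 / β ^ (k + 1)) := by ring
        _ ≤ 1 + (S - 1) * (1 / β) := by gcongr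
        _ = 1 + (S - 1) / β := by ring
    · rw [heq]
      linarith [div_pos (sub_pos.mpr hS) hβ0]
  have hS_le : S ≤ 1 + (S - 1) / β := ciSup_le hbound
  have : (S - 1) / β < S - 1 := div_lt_self (sub_pos.mpr hS) hβ
  linarith

lemma Bhat_shift_le_of_forall_lexLe (hx : IsWord x)
    (hmax : ∀ j, LexLe (shift j x) (shift m x)) (j : ℕ) :
    Bhat (shift j x) ≤ Bhat (shift m x) := by
  by_cases h0 : shift m x = 0
  · rw [h0] at hmax ⊢
    rw [eq_zero_of_lexLe_zero (hmax j)]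
  have h1 := one_le_Bhat (hx.shift m) h0
  refine le_of_forall_gt_imp_ge_of_dense fun β hβ => Bhat_le_of_fword_le_one (h1.trans_lt hβ) ?_
  exact fword_shift_le_one_of_forall_lexLe hx (h1.trans_lt hβ) hmax
    (fword_le_one_of_Bhat_lt (hx.shift m) hβ) j

lemma Bhat_shift_le_Bbar (hx : IsWord x) (m : ℕ) : Bhat (shift m x) ≤ Bbar x := by
  obtain ⟨M, hM⟩ := hx
  refine le_ciSup (f := fun j => Bhat (shift j x)) ⟨M + 2, ?_⟩ m
  rintro _ ⟨j, rfl⟩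
  exact Bhat_le_of_le fun i => hM _

lemma Bbar_eq_of_forall_lexLe (hx : IsWord x) (hmax : ∀ j, LexLe (shift j x) (shift m x)) :
    Bbar x = Bhat (shift m x) :=
  le_antisymm (ciSup_le (Bhat_shift_le_of_forall_lexLe hx hmax)) (Bhat_shift_le_Bbar hx m)

end Parry

lemma lexLt_shift_of_induces {n ℓ : ℕ} {π w : ℕ → ℕ} (hn : 2 ≤ n) (hπ : IsPerm n π)
    (hπn : π n = 1) (hℓ : ℓ ∈ Set.Icc 1 n) (hℓn : π ℓ = n)
    (hw0 : ∀ i, n - 1 ≤ i → w i = 0) (hwπ : Induces n w π) {s : ℕ} (hs : s ≠ ℓ - 1) :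
    LexLt (shift s w) (shift (ℓ - 1) w) := by
  rcases lt_or_ge s (n - 1) with hsn | hsn
  · have hmem : s + 1 ∈ Set.Icc 1 n := ⟨by omega, by omega⟩
    have hne : π (s + 1) ≠ n := fun h => hs (by
      have := hπ.injOn hmem hℓ (h.trans hℓn.symm)
      omega)
    simpa using (hwπ _ hmem ℓ hℓ).mp (hℓn ▸ (hπ.mapsTo hmem).2.lt_of_ne hne)
  · have htail : shift s w = shift (n - 1) w :=
      funext fun i => (hw0 _ (by omega)).trans (hw0 _ (by omega)).symm
    rw [htail]
    exact (hwπ n ⟨by omega, le_rfl⟩ ℓ hℓ).mp (by omega)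

lemma Bhat_shift_lt_of_agree {w v : ℕ → ℕ} {N k : ℕ} (hw0 : ∀ i, N ≤ i → w i = 0)
    (hv : IsWord v) (hagree : ∀ i < N, v i = w i) (hvw : v ≠ w) (hk : k ≤ N)
    (h0 : shift k w ≠ 0) : Bhat (shift k w) < Bhat (shift k v) := by
  have hwv : ∀ i, w i ≤ v i := fun i =>
    if h : i < N then (hagree i h).ge else (hw0 i (by omega)).trans_le (Nat.zero_le _)
  obtain ⟨i, hi⟩ := Function.ne_iff.mp hvw
  have hi_tail : N ≤ i := by
    by_contra! h
    exact hi (hagree i h)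
  have hne : shift k w ≠ shift k v := fun h => hi <| by
    have hwi := congrFun h (i - k)
    rw [shift, shift, Nat.sub_add_cancel (by omega)] at hwi
    exact hwi.symm
  exact Bhat_lt_Bhat_of_le_of_ne (N := N) (fun j hj => hw0 _ (by omega)) h0 (hv.shift k)
    (fun j => hwv _) hne

/-- Let `π` be a permutation of `{1,…,n}` with `π(n) = 1`, `ℓ = π⁻¹(n)`, and
let `w` be a word with `w_i = 0` for all `i ≥ n-1` (zero-based) that induces `π`. Then:
(1) `σ^s w < σ^{ℓ-1} w` for every `s ≠ ℓ-1`; (2) `B̄(w) = B̂(σ^{ℓ-1} w)`;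
(3) every word `v ≠ w` agreeing with `w` in its first `n-1` letters has `B̄(v) > B̄(w)`. -/
theorem stmt_7 (n : ℕ) (hn : 2 ≤ n) (π : ℕ → ℕ) (hπ : IsPerm n π)
    (hπn : π n = 1) (ℓ : ℕ) (hℓ : ℓ ∈ Set.Icc 1 n) (hℓn : π ℓ = n)
    (w : ℕ → ℕ) (hw0 : ∀ i : ℕ, n - 1 ≤ i → w i = 0) (hwπ : Induces n w π) :
    (∀ s : ℕ, s ≠ ℓ - 1 → LexLt (shift s w) (shift (ℓ - 1) w)) ∧
      Bbar w = Bhat (shift (ℓ - 1) w) ∧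
      (∀ v : ℕ → ℕ, IsWord v → v ≠ w → (∀ i < n - 1, v i = w i) → Bbar w < Bbar v) := by
  have hmax : ∀ s, s ≠ ℓ - 1 → LexLt (shift s w) (shift (ℓ - 1) w) := fun s =>
    lexLt_shift_of_induces hn hπ hπn hℓ hℓn hw0 hwπ
  have hBbar : Bbar w = Bhat (shift (ℓ - 1) w) :=
    Bbar_eq_of_forall_lexLe (isWord_of_eventually_zero hw0) fun s =>
      if hs : s = ℓ - 1 then Or.inr (hs ▸ rfl) else Or.inl (hmax s hs)
  refine ⟨hmax, hBbar, fun v hv hvw hagree => ?_⟩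
  have hℓn' : ℓ ≠ n := fun h => by rw [h, hπn] at hℓn; omega
  have hu0 : shift (ℓ - 1) w ≠ 0 := ne_zero_of_lexLt (hmax (n - 1) (by omega))
  calc Bbar w = Bhat (shift (ℓ - 1) w) := hBbar
    _ < Bhat (shift (ℓ - 1) v) :=
        Bhat_shift_lt_of_agree hw0 hv hagree hvw (by have := hℓ.2; omega) hu0
    _ ≤ Bbar v := Bhat_shift_le_Bbar hv _
end
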